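/- arXiv:1311.4222 — 2 statements merged into one kernel-verified Lean document; each statement's English description precedes it below -/
import Mathlib

section
/- Let G be a group, H ≤ G a subgroup, Σ a finite alphabet, and F a set of forbidden patterns each of whose domains is a finite subset of H. If there exists a configuration c : H → Σ such that no pattern of F appears in c (with respect to H-translates), then there exists a configuration c' : G → Σ such that no pattern of F appears in c' (with respect to G-translates). -/
/-- A pattern `P` with finite domain `D ⊆ K` appears in a configuration
`x : K → A` if some `K`-translate of `x` matches `P` on `D`. -/
def Appears {K A : Type*} [Group K] (x : K → A) (D : Finset K) (P : D → A) :
    Prop :=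
  ∃ i : K, ∀ j : D, x (i * (j : K)) = P j

theorem stmt_11 (G A : Type*) [Group G] (H : Subgroup G)
    (ι : Type*) (D : ι → Finset G) (hD : ∀ k, ↑(D k) ⊆ (H : Set G))
    (P : ∀ k, (D k) → A)
    (c : H → A)
    (hc : ∀ k, ¬ ∃ i : H, ∀ j : D k, c (i * ⟨(j : G), hD k j.2⟩) = P k j) :
    ∃ c' : G → A, ∀ k, ¬ Appears c' (D k) (P k) := by
  classical
  -- h g ∈ H : the "H-part" of g in the left coset decomposition
  have hmem : ∀ g : G, (Quotient.out (QuotientGroup.mk (s := H) g))⁻¹ * g ∈ H := by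
    intro g
    have : QuotientGroup.mk (s := H) (Quotient.out (QuotientGroup.mk (s := H) g)) =
        QuotientGroup.mk g := by exact QuotientGroup.out_eq' _
    exact (QuotientGroup.eq).1 this
  set h : G → H := fun g => ⟨_, hmem g⟩ with hh
  refine ⟨fun g => c (h g), fun k => ?_⟩
  rintro ⟨i, hi⟩
  apply hc k
  refine ⟨h i, fun j => ?_⟩
  have hjH : (j : G) ∈ H := hD k j.2
  have key : h (i * (j : G)) = h i * ⟨(j : G), hjH⟩ := by
    have hq : QuotientGroup.mk (s := H) (i * (j : G)) = QuotientGroup.mk i := by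
      symm; exact (QuotientGroup.eq).2 (by simpa using hjH)
    apply Subtype.ext
    simp [hh, hq, mul_assoc]
  rw [← key]
  exact hi j
end

section
/- Let G be a group, H ≤ G, Σ a finite alphabet, and F a finite set of forbidden patterns over finite subsets of H. Then the G-SFT defined by F is nonempty if and only if the H-SFT defined by F is nonempty. -/
noncomputable def cosetCoord {G : Type*} [Group G] (H : Subgroup G) (g : G) : H :=
  ⟨(QuotientGroup.mk g : G ⧸ H).out⁻¹ * g, QuotientGroup.eq.mp (QuotientGroup.out_eq' _)⟩

theorem cosetCoord_mul_of_mem {G : Type*} [Group G] (H : Subgroup G) (g : G) {h : G}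
    (hh : h ∈ H) : cosetCoord H (g * h) = cosetCoord H g * ⟨h, hh⟩ := by
  have same_coset : (QuotientGroup.mk (g * h) : G ⧸ H) = QuotientGroup.mk g :=
    (QuotientGroup.eq.mpr (by simpa using hh)).symm
  ext
  simp only [cosetCoord, same_coset, Subgroup.coe_mul, mul_assoc]

theorem stmt_12_general (G A : Type*) [Group G] (H : Subgroup G)
    (ι : Type*) (D : ι → Finset G) (hD : ∀ k, ↑(D k) ⊆ (H : Set G))
    (P : ∀ k, (D k) → A) :
    (∃ c' : G → A, ∀ k, ¬ Appears c' (D k) (P k)) ↔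
      (∃ c : H → A,
        ∀ k, ¬ ∃ i : H, ∀ j : D k, c (i * ⟨(j : G), hD k j.2⟩) = P k j) := by
  constructor
  · rintro ⟨c', hc'⟩
    exact ⟨fun h => c' h, fun k ⟨i, hi⟩ => hc' k ⟨i, hi⟩⟩
  · rintro ⟨c, hc⟩
    refine ⟨c ∘ cosetCoord H, fun k ⟨i, hi⟩ => hc k ⟨cosetCoord H i, fun j => ?_⟩⟩
    rw [← cosetCoord_mul_of_mem H i (hD k j.2)]
    exact hi j

theorem stmt_12 (G A : Type*) [Group G] [Fintype A] (H : Subgroup G)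
    (ι : Type*) [Finite ι] (D : ι → Finset G) (hD : ∀ k, ↑(D k) ⊆ (H : Set G))
    (P : ∀ k, (D k) → A) :
    (∃ c' : G → A, ∀ k, ¬ Appears c' (D k) (P k)) ↔
      (∃ c : H → A,
        ∀ k, ¬ ∃ i : H, ∀ j : D k, c (i * ⟨(j : G), hD k j.2⟩) = P k j) :=
  stmt_12_general G A H ι D hD P
end
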